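/- Let q ≥ 2 and let χ be a primitive Dirichlet character modulo q. Let b be a positive integer, α > 0 a real number, and ℓ a positive half-integer (2ℓ ∈ ℤ_{≥1}) with q | 2ℓ. Then for every z > 0: (α/√(4πz)) Σ_{k∈ℤ} χ(k) e^{−α²(2ℓk/q + b)²/(4z)} = (G(χ)/(2ℓ)) Σ_{j∈ℤ} \bar{χ}(j) e^{−π²j²z/(α²ℓ²)} e^{πi b j/ℓ}. -/

import Mathlib

/-!
With `t = α²ℓ²/(π z q²)` and `x = b q / (2ℓ)` the left side is the theta series
`Σ_k χ(k) exp(-π t (k + x)²)`. Split `k = m q + r`: on each residue class Poisson summation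
(`HurwitzZeta.evenKernel_functional_equation`) turns the Gaussian sum over `m` into a sum over a
dual variable `j` twisted by `e(j (r + x) / q)`. Summing over `r` then produces the twisted Gauss
sum `Σ_r χ(r) e(j r / q)`, which for primitive `χ` equals `χ̄(j) G(χ)`.
-/

open scoped Real
open Complex

/-- The Gauss sum `G(χ) = Σ_{a=0}^{q−1} χ(a) e^{2πi a/q}` of a Dirichlet character mod `q`. -/
noncomputable def gaussSumChar {q : ℕ} (χ : DirichletCharacter ℂ q) : ℂ :=
  ∑ a ∈ Finset.range q, χ (a : ZMod q) * Complex.exp (2 * Real.pi * I * (a : ℝ) / (q : ℝ))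

open HurwitzZeta in
theorem tsum_rexp_neg_mul_add_sq {t : ℝ} (ht : 0 < t) (x : ℝ) :
    ∑' n : ℤ, (rexp (-π * (n + x) ^ 2 * t) : ℂ) =
      (√t : ℂ)⁻¹ * ∑' n : ℤ, cexp (2 * π * I * x * n) * rexp (-π * n ^ 2 / t) := by
  have hcos := hasSum_int_cosKernel x (one_div_pos.mpr ht)
  simp only [mul_one_div] at hcos
  rw [(hasSum_ofReal.mpr (hasSum_int_evenKernel x ht)).tsum_eq, hcos.tsum_eq,
    evenKernel_functional_equation, ← Real.sqrt_eq_rpow]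
  push_cast
  ring

theorem tsum_int_eq_sum_tsum_mul_add {α : Type*} [AddCommGroup α] [UniformSpace α]
    [IsUniformAddGroup α] [CompleteSpace α] [T0Space α] (N : ℕ) [NeZero N] {f : ℤ → α}
    (hf : Summable f) : ∑' k, f k = ∑ r : Fin N, ∑' m : ℤ, f (m * N + r) := by
  let e : Fin N × ℤ ≃ ℤ := (Equiv.prodComm _ _).trans (Int.divModEquiv N).symm
  rw [← e.tsum_eq]
  exact (e.summable_iff.mpr hf).tsum_prod.trans (tsum_fintype _)

theorem sum_zmod_eq_sum_range {M : Type*} [AddCommMonoid M] (N : ℕ) [NeZero N]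
    (f : ZMod N → M) :
    ∑ a : ZMod N, f a = ∑ i ∈ Finset.range N, f i :=
  Finset.sum_nbij' ZMod.val (↑) (fun a _ ↦ Finset.mem_range.mpr a.val_lt)
    (fun _ _ ↦ Finset.mem_univ _) (fun a _ ↦ ZMod.natCast_zmod_val a)
    (fun _ hi ↦ ZMod.val_cast_of_lt (Finset.mem_range.mp hi))
    (fun a _ ↦ by rw [ZMod.natCast_zmod_val])

theorem summable_dirichletCharacter_mul_rexp_neg_mul_add_sq {q : ℕ}
    (χ : DirichletCharacter ℂ q) {t : ℝ} (ht : 0 < t) (x : ℝ) :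
    Summable fun k : ℤ ↦ χ k * rexp (-π * (k + x) ^ 2 * t) := by
  refine (HurwitzZeta.hasSum_int_evenKernel x ht).summable.of_norm_bounded fun k ↦ ?_
  rw [norm_mul, norm_real, Real.norm_of_nonneg (Real.exp_pos _).le]
  exact mul_le_of_le_one_left (Real.exp_pos _).le (χ.norm_le_one _)

section DirichletCharacter

variable {q : ℕ} [NeZero q] {χ : DirichletCharacter ℂ q}

theorem stdAddChar_mulShift_natCast (j : ℤ) (r : ℕ) :
    (ZMod.stdAddChar.mulShift (j : ZMod q)) r = cexp (2 * π * I * j * r / q) := by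
  rw [AddChar.mulShift_apply, show (j : ZMod q) * r = ((j * r : ℤ) : ZMod q) by push_cast; rfl,
    ZMod.stdAddChar_coe]
  push_cast
  ring_nf

theorem gaussSumChar_eq_gaussSum (χ : DirichletCharacter ℂ q) :
    gaussSumChar χ = gaussSum χ ZMod.stdAddChar := by
  rw [gaussSumChar, gaussSum, sum_zmod_eq_sum_range]
  refine Finset.sum_congr rfl fun r _ ↦ ?_
  rw [← AddChar.mulShift_one ZMod.stdAddChar, ← Int.cast_one, stdAddChar_mulShift_natCast]
  push_cast
  ring_nf

theorem sum_fin_mul_cexp_eq_conj_mul_gaussSumChar (hχ : χ.IsPrimitive) (x : ℝ) (j : ℤ) :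
    ∑ r : Fin q, χ (r : ℕ) * cexp (2 * π * I * ((((r : ℕ) + x) / q : ℝ) : ℂ) * j) =
      cexp (2 * π * I * x * j / q) * (starRingEnd ℂ (χ j) * gaussSumChar χ) := by
  have hterm (r : ℕ) : χ r * cexp (2 * π * I * (((r + x) / q : ℝ) : ℂ) * j) =
      cexp (2 * π * I * x * j / q) * (χ r * ZMod.stdAddChar.mulShift (j : ZMod q) r) := by
    rw [stdAddChar_mulShift_natCast, mul_left_comm, ← Complex.exp_add]
    congr 2
    push_cast
    ring
  rw [Fin.sum_univ_eq_sum_range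
      (fun r ↦ χ r * cexp (2 * π * I * (((r + x) / q : ℝ) : ℂ) * j)),
    Finset.sum_congr rfl fun r _ ↦ hterm r, ← Finset.mul_sum, ← sum_zmod_eq_sum_range q
      (fun a ↦ χ a * ZMod.stdAddChar.mulShift (j : ZMod q) a), ← gaussSum,
    gaussSum_mulShift_of_isPrimitive _ hχ, gaussSumChar_eq_gaussSum, ← MulChar.star_apply']
  rfl

theorem tsum_dirichletCharacter_mul_rexp_neg_mul_add_sq (hχ : χ.IsPrimitive) {t : ℝ}
    (ht : 0 < t) (x : ℝ) :
    ∑' k : ℤ, χ k * rexp (-π * (k + x) ^ 2 * t) =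
      (↑(q * √t))⁻¹ * gaussSumChar χ *
        ∑' j : ℤ, starRingEnd ℂ (χ j) * rexp (-π * j ^ 2 / (q ^ 2 * t)) *
          cexp (2 * π * I * x * j / q) := by
  have hq : (0 : ℝ) < q := Nat.cast_pos.mpr (NeZero.pos q)
  have hT : 0 < (q : ℝ) ^ 2 * t := by positivity
  have hsqrt : √((q : ℝ) ^ 2 * t) = q * √t := by
    rw [Real.sqrt_mul (sq_nonneg _), Real.sqrt_sq hq.le]
  have hfiber (r : Fin q) :
      ∑' m : ℤ, χ ↑(m * q + r) * rexp (-π * (↑(m * q + r : ℤ) + x) ^ 2 * t) =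
        (↑(q * √t))⁻¹ * ∑' j : ℤ, χ (r : ℕ) *
          (cexp (2 * π * I * ((((r : ℕ) + x) / q : ℝ) : ℂ) * j) *
            rexp (-π * j ^ 2 / (q ^ 2 * t))) := by
    rw [tsum_mul_left, mul_left_comm, ← hsqrt, ← tsum_rexp_neg_mul_add_sq hT, ← tsum_mul_left]
    refine tsum_congr fun m ↦ ?_
    congr 1
    · push_cast [ZMod.natCast_self]
      ring_nf
    · congr 2
      field_simp
      push_cast
      ring
  have hdual (r : Fin q) := (HurwitzZeta.hasSum_int_cosKernel (((r : ℕ) + x) / q)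
    (one_div_pos.mpr hT)).summable.mul_left (χ (r : ℕ))
  simp only [mul_one_div] at hdual
  calc ∑' k : ℤ, χ k * rexp (-π * (k + x) ^ 2 * t)
      = ∑ r : Fin q, ∑' m : ℤ,
          χ ↑(m * q + r) * rexp (-π * (↑(m * q + r : ℤ) + x) ^ 2 * t) :=
        tsum_int_eq_sum_tsum_mul_add q (summable_dirichletCharacter_mul_rexp_neg_mul_add_sq χ ht x)
    _ = (↑(q * √t))⁻¹ * ∑' j : ℤ, (∑ r : Fin q, χ (r : ℕ) *
          cexp (2 * π * I * ((((r : ℕ) + x) / q : ℝ) : ℂ) * j)) *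
            rexp (-π * j ^ 2 / (q ^ 2 * t)) := by
        rw [Finset.sum_congr rfl fun r _ ↦ hfiber r, ← Finset.mul_sum,
          ← Summable.tsum_finsetSum fun r _ ↦ hdual r]
        simp_rw [Finset.sum_mul, mul_assoc]
    _ = _ := by
        simp_rw [sum_fin_mul_cexp_eq_conj_mul_gaussSumChar hχ]
        rw [← tsum_mul_left, ← tsum_mul_left]
        exact tsum_congr fun j ↦ by ring

end DirichletCharacter

theorem theta_series_identity_with_character_general (q : ℕ)
    (χ : DirichletCharacter ℂ q) (hχ : χ.IsPrimitive)
    (b : ℕ) (α : ℝ) (hα : 0 < α) (ℓ : ℝ)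
    (hℓ : ∃ L : ℕ, 0 < L ∧ ((L : ℝ) = 2 * ℓ) ∧ q ∣ L)
    (z : ℝ) (hz : 0 < z) :
    ((α / Real.sqrt (4 * Real.pi * z) : ℝ) : ℂ) *
        ∑' k : ℤ, χ ((k : ZMod q)) *
          Complex.exp (-(((α ^ 2 * (2 * ℓ * (k : ℝ) / (q : ℝ) + (b : ℝ)) ^ 2 / (4 * z)) : ℝ) : ℂ)) =
      (gaussSumChar χ / ((2 * ℓ : ℝ) : ℂ)) *
        ∑' j : ℤ, (starRingEnd ℂ) (χ ((j : ZMod q))) *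
          Complex.exp (-(((Real.pi ^ 2 * (j : ℝ) ^ 2 * z / (α ^ 2 * ℓ ^ 2)) : ℝ) : ℂ)) *
          Complex.exp (Real.pi * I * (b : ℝ) * (j : ℝ) / (ℓ : ℂ)) := by
  obtain ⟨L, hL, hLℓ, hqL⟩ := hℓ
  have : NeZero q := ⟨(Nat.pos_of_dvd_of_pos hqL hL).ne'⟩
  have hq : (0 : ℝ) < q := Nat.cast_pos.mpr (NeZero.pos q)
  have hℓ : 0 < ℓ := by linarith [(Nat.cast_pos.mpr hL : (0 : ℝ) < L)]
  set t := α ^ 2 * ℓ ^ 2 / (π * z * q ^ 2) with ht_def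
  have ht : 0 < t := by positivity
  have hconst : α / √(4 * π * z) * (q * √t)⁻¹ = (2 * ℓ)⁻¹ := by
    have hsqrt : √t * √(4 * π * z) * q = 2 * α * ℓ := by
      rw [← Real.sqrt_mul ht.le, ← eq_div_iff hq.ne',
        Real.sqrt_eq_iff_mul_self_eq (by positivity) (by positivity), ht_def]
      field_simp
      ring
    have : 0 < √(4 * π * z) := by positivity
    field_simp
    linear_combination -hsqrt
  have hgauss (k : ℤ) : -(α ^ 2 * (2 * ℓ * k / q + b) ^ 2 / (4 * z)) =
      -π * (k + b * q / (2 * ℓ)) ^ 2 * t := by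
    rw [ht_def]
    field_simp
    ring
  have hdual (j : ℤ) :
      -(π ^ 2 * j ^ 2 * z / (α ^ 2 * ℓ ^ 2)) = -π * j ^ 2 / (q ^ 2 * t) := by
    rw [ht_def]
    field_simp
  have hphase (j : ℤ) : π * I * (b : ℝ) * (j : ℝ) / (ℓ : ℂ) =
      2 * π * I * ((b * q / (2 * ℓ) : ℝ) : ℂ) * j / q := by
    have : (ℓ : ℂ) ≠ 0 := ofReal_ne_zero.mpr hℓ.ne'
    have : (q : ℂ) ≠ 0 := Nat.cast_ne_zero.mpr (NeZero.ne q)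
    push_cast
    field_simp
  simp_rw [← ofReal_neg, hgauss, hdual, hphase, ← ofReal_exp]
  rw [tsum_dirichletCharacter_mul_rexp_neg_mul_add_sq hχ ht, ← mul_assoc, ← mul_assoc,
    ← ofReal_inv, ← ofReal_mul, hconst]
  push_cast
  ring

/-- let `q ≥ 2`, `χ` a primitive Dirichlet character mod `q`, `b ≥ 1` an
integer, `α > 0`, and `ℓ` a positive half-integer (`2ℓ ∈ ℤ_{≥1}`) with `q ∣ 2ℓ`. Then for
every `z > 0`:
`(α/√(4πz)) Σ_{k∈ℤ} χ(k) e^{−α²(2ℓk/q+b)²/(4z)}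
  = (G(χ)/(2ℓ)) Σ_{j∈ℤ} χ̄(j) e^{−π²j²z/(α²ℓ²)} e^{πi b j/ℓ}`. -/
theorem theta_series_identity_with_character (q : ℕ) (hq : 2 ≤ q)
    (χ : DirichletCharacter ℂ q) (hχ : χ.IsPrimitive)
    (b : ℕ) (hb : 0 < b) (α : ℝ) (hα : 0 < α) (ℓ : ℝ)
    (hℓ : ∃ L : ℕ, 0 < L ∧ ((L : ℝ) = 2 * ℓ) ∧ q ∣ L)
    (z : ℝ) (hz : 0 < z) :
    ((α / Real.sqrt (4 * Real.pi * z) : ℝ) : ℂ) *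
        ∑' k : ℤ, χ ((k : ZMod q)) *
          Complex.exp (-(((α ^ 2 * (2 * ℓ * (k : ℝ) / (q : ℝ) + (b : ℝ)) ^ 2 / (4 * z)) : ℝ) : ℂ)) =
      (gaussSumChar χ / ((2 * ℓ : ℝ) : ℂ)) *
        ∑' j : ℤ, (starRingEnd ℂ) (χ ((j : ZMod q))) *
          Complex.exp (-(((Real.pi ^ 2 * (j : ℝ) ^ 2 * z / (α ^ 2 * ℓ ^ 2)) : ℝ) : ℂ)) *
          Complex.exp (Real.pi * I * (b : ℝ) * (j : ℝ) / (ℓ : ℂ)) :=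
  theta_series_identity_with_character_general q χ hχ b α hα ℓ hℓ z hz
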